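/- For every n ≥ 2, W(s^{(2)}_n − 2) = s^{(2)}_{n−1}. -/

import Mathlib

/-- Moser function `m_r(n)`: reinterpret the base-`r` digits of `n` as base-`r²` digits,
i.e. `m_r(n) = Σ_i ν_i r^(2i)` where `n = Σ_i ν_i r^i` is the base-`r` expansion. -/
def moser (r n : ℕ) : ℕ := Nat.ofDigits (r ^ 2) (Nat.digits r n)

/-- `s^(r)_n = r · m_r(n−1) + 1` for `n ≥ 1`. -/
def moserS (r n : ℕ) : ℕ := r * moser r (n - 1) + 1

/-- The `i`-th base-`r` digit of `n` (0 if beyond the expansion). -/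
def dig (r n i : ℕ) : ℕ := (Nat.digits r n).getD i 0

/-- Josephus–Groër survivor function: with `M = N` if `N` is odd, `M = N − 1` otherwise,
and `M = Σ_j b_j 2^j` the binary expansion, `W(N) = 1 + Σ_{j odd} b_j 2^j`. -/
def W (N : ℕ) : ℕ :=
  let M := if N % 2 = 1 then N else N - 1
  1 + ((((Nat.digits 2 M).zipIdx.map Prod.swap).filter (fun p => p.1 % 2 = 1)).map (fun p => p.2 * 2 ^ p.1)).sum

/-!
Write `m = m₂(n-1)`, so that `s_n - 2 = 1 + 2(m - 1)` and `W(s_n - 2) = 1 + 2 evenBits(m - 1)`,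
where `evenBits x` keeps the binary digits of `x` at even positions. The digits of `m₂(k)` all
sit at even positions, and `m₂(2j) - 1 = 4(m₂(j) - 1) + 3` has even-position part
`4 evenBits(m₂(j) - 1) + 1`; by induction `evenBits(m₂(k) - 1) = m₂(k - 1)`.
-/

theorem moser_zero (r : ℕ) : moser r 0 = 0 := by
  simp [moser]

section Moser

variable {r : ℕ}

theorem moser_add_mul (hr : 1 < r) {b : ℕ} (hb : b < r) (j : ℕ) :
    moser r (b + r * j) = b + r ^ 2 * moser r j := by
  by_cases h : b = 0 ∧ j = 0
  · obtain ⟨rfl, rfl⟩ := h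
    simp [moser_zero]
  · rw [moser, Nat.digits_add r hr b j hb (not_and_or.mp h), Nat.ofDigits_cons, ← moser]

theorem moser_pos (hr : 1 < r) {k : ℕ} (hk : 0 < k) : 0 < moser r k := by
  induction k using Nat.strong_induction_on with
  | _ k ih =>
    rw [← Nat.mod_add_div k r, moser_add_mul hr (Nat.mod_lt k (by omega))]
    rcases Nat.eq_zero_or_pos (k / r) with hq | hq
    · have : k % r = k := Nat.mod_eq_of_lt (Nat.lt_of_div_eq_zero (by omega) hq)
      omega
    · have := ih (k / r) (Nat.div_lt_self hk hr) hq
      positivity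

end Moser

theorem moser_two_add_two_mul {b : ℕ} (hb : b < 2) (j : ℕ) : moser 2 (b + 2 * j) = b + 4 * moser 2 j :=
  moser_add_mul one_lt_two hb j

def evenBits (x : ℕ) : ℕ :=
  if x = 0 then 0 else x % 2 + 4 * evenBits (x / 4)
decreasing_by omega

theorem evenBits_zero : evenBits 0 = 0 := by
  rw [evenBits, if_pos rfl]

theorem evenBits_eq (x : ℕ) : evenBits x = x % 2 + 4 * evenBits (x / 4) := by
  rcases Nat.eq_zero_or_pos x with rfl | hx
  · simp [evenBits_zero]
  · rw [evenBits, if_neg hx.ne']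

theorem evenBits_add_four_mul {b : ℕ} (hb : b < 4) (q : ℕ) :
    evenBits (b + 4 * q) = b % 2 + 4 * evenBits q := by
  rw [evenBits_eq, show (b + 4 * q) % 2 = b % 2 by omega, show (b + 4 * q) / 4 = q by omega]

theorem evenBits_moser_two (k : ℕ) : evenBits (moser 2 k) = moser 2 k := by
  induction k using Nat.strong_induction_on with
  | _ k ih =>
    rcases Nat.eq_zero_or_pos k with rfl | hk
    · simp [moser_zero, evenBits_zero]
    obtain ⟨b, j, hb, rfl⟩ : ∃ b j, b < 2 ∧ k = b + 2 * j := ⟨k % 2, k / 2, by omega, by omega⟩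
    rw [moser_two_add_two_mul hb, evenBits_add_four_mul (by omega), ih j (by omega)]
    omega

theorem evenBits_moser_two_sub_one {k : ℕ} (hk : 0 < k) :
    evenBits (moser 2 k - 1) = moser 2 (k - 1) := by
  induction k using Nat.strong_induction_on with
  | _ k ih =>
    obtain ⟨j, rfl | rfl⟩ : ∃ j, k = 2 * j ∨ k = 1 + 2 * j := ⟨k / 2, by omega⟩
    · have hj : 0 < j := by omega
      have hm : 0 < moser 2 j := moser_pos one_lt_two hj
      have hodd : 2 * j - 1 = 1 + 2 * (j - 1) := by omega
      calc evenBits (moser 2 (2 * j) - 1)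
          = evenBits (3 + 4 * (moser 2 j - 1)) := by
            rw [← zero_add (2 * j), moser_two_add_two_mul two_pos]; congr 1; omega
        _ = 1 + 4 * moser 2 (j - 1) := by
            rw [evenBits_add_four_mul (by omega), ih j (by omega) hj]
        _ = moser 2 (2 * j - 1) := by rw [hodd, moser_two_add_two_mul one_lt_two]
    · calc evenBits (moser 2 (1 + 2 * j) - 1)
          = evenBits (0 + 4 * moser 2 j) := by
            rw [moser_two_add_two_mul one_lt_two, Nat.add_sub_cancel_left, zero_add]
        _ = 0 + 4 * moser 2 j := by rw [evenBits_add_four_mul (by omega), evenBits_moser_two]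
        _ = moser 2 (1 + 2 * j - 1) := by
            rw [Nat.add_sub_cancel_left, ← zero_add (2 * j), moser_two_add_two_mul two_pos]

def oddPlaceSum (j : ℕ) (l : List ℕ) : ℕ :=
  ((((l.zipIdx j).map Prod.swap).filter (fun p => p.1 % 2 = 1)).map (fun p => p.2 * 2 ^ p.1)).sum

theorem oddPlaceSum_nil (j : ℕ) : oddPlaceSum j [] = 0 := rfl

theorem oddPlaceSum_cons (j a : ℕ) (l : List ℕ) :
    oddPlaceSum j (a :: l) = (if j % 2 = 1 then a * 2 ^ j else 0) + oddPlaceSum (j + 1) l := by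
  unfold oddPlaceSum
  rw [List.zipIdx_cons, List.map_cons]
  by_cases h : j % 2 = 1 <;> simp [h]

theorem oddPlaceSum_digits_two (x j : ℕ) :
    oddPlaceSum j (Nat.digits 2 x) =
      2 ^ j * if j % 2 = 1 then evenBits x else 2 * evenBits (x / 2) := by
  induction x using Nat.strong_induction_on generalizing j with
  | _ x ih =>
    rcases Nat.eq_zero_or_pos x with rfl | hx
    · simp [oddPlaceSum_nil, evenBits_zero]
    rw [Nat.digits_def' one_lt_two hx, oddPlaceSum_cons, ih (x / 2) (by omega)]
    by_cases h : j % 2 = 1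
    · rw [evenBits_eq x, Nat.div_div_eq_div_mul]
      simp only [h, ↓reduceIte, pow_succ, show (j + 1) % 2 = 0 by omega, zero_ne_one]
      ring
    · simp only [h, ↓reduceIte, pow_succ, show (j + 1) % 2 = 1 by omega, zero_add]
      ring

theorem W_of_odd {N : ℕ} (hN : N % 2 = 1) : W N = 1 + oddPlaceSum 0 (Nat.digits 2 N) := by
  simp only [W, if_pos hN]
  rfl

theorem W_one_add_two_mul (x : ℕ) : W (1 + 2 * x) = 1 + 2 * evenBits x := by
  have hdigits : Nat.digits 2 (1 + 2 * x) = 1 :: Nat.digits 2 x :=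
    Nat.digits_add 2 one_lt_two 1 x one_lt_two (by omega)
  rw [W_of_odd (by omega), hdigits, oddPlaceSum_cons, oddPlaceSum_digits_two]
  simp

/-- For every `n ≥ 2`, `W(s^(2)_n − 2) = s^(2)_{n−1}`. -/
theorem W_moserS_sub_two (n : ℕ) (hn : 2 ≤ n) :
    W (moserS 2 n - 2) = moserS 2 (n - 1) := by
  obtain ⟨k, rfl⟩ : ∃ k, n = k + 2 := ⟨n - 2, by omega⟩
  have hm : 0 < moser 2 (k + 1) := moser_pos one_lt_two k.succ_pos
  have hs : moserS 2 (k + 2) - 2 = 1 + 2 * (moser 2 (k + 1) - 1) := by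
    rw [moserS, show k + 2 - 1 = k + 1 from rfl]; omega
  rw [hs, W_one_add_two_mul, evenBits_moser_two_sub_one k.succ_pos]
  show 1 + 2 * moser 2 k = 2 * moser 2 k + 1
  ring
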